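/- For any unital qubit quantum channel Φ ∈ C(ℂ²), with √P = diag(√p, √(1−p)) and √Q = diag(√(1−p), √p), one has the identity ((σ_y⊗σ_y)(I⊗√P) D_Φ (I⊗√P)(σ_y⊗σ_y))* = (I⊗√Q) D_Φ (I⊗√Q), where σ_y is the Pauli-Y matrix, * denotes entrywise complex conjugation, and D_Φ is the Choi matrix of Φ. -/

import Mathlib

/-! For a 2 × 2 matrix, `σ_y Aᵀ σ_y = adj A = (tr A) • 1 - A`, so a unital trace-preserving
qubit map commutes with the adjugate. Writing `D_Φ = ∑ Φ(E_jl) ⊗ E_jl` and using that `adj`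
permutes the matrix units up to sign, this gives `(σ_y ⊗ σ_y) D_Φᵀ (σ_y ⊗ σ_y) = D_Φ`; and `D_Φᵀ`
is the entrywise conjugate of `D_Φ` since `D_Φ` is Hermitian. Finally `σ_y √P = √Q σ_y`, while
`σ_y ⊗ σ_y` and `√Q` are real. -/

open Matrix Kronecker
open scoped BigOperators ComplexOrder Classical

noncomputable section

/-- Matrix logarithm of a Hermitian matrix, taken on the support
(`Real.log 0 = 0` implements the convention `log 0 = 0` on eigenvalues). -/
def matLog {n : Type*} [Fintype n] [DecidableEq n] (A : Matrix n n ℂ) : Matrix n n ℂ :=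
  if hA : A.IsHermitian then
    (hA.eigenvectorUnitary : Matrix n n ℂ) *
      Matrix.diagonal (fun i => (Real.log (hA.eigenvalues i) : ℂ)) *
      star (hA.eigenvectorUnitary : Matrix n n ℂ)
  else 0

/-- von Neumann entropy `H(ρ) = -Tr (ρ log ρ)`. -/
def vonNeumann {n : Type*} [Fintype n] [DecidableEq n] (ρ : Matrix n n ℂ) : ℝ :=
  -((ρ * matLog ρ).trace.re)

/-- A density matrix: positive semidefinite with unit trace. -/
def IsDensityMatrix {n : Type*} [Fintype n] [DecidableEq n] (ρ : Matrix n n ℂ) : Prop :=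
  ρ.PosSemidef ∧ ρ.trace = 1

/-- Support (range) inclusion, `supp ρ ⊆ supp σ`. -/
def SuppLE {n : Type*} [Fintype n] [DecidableEq n] (ρ σ : Matrix n n ℂ) : Prop :=
  LinearMap.range ρ.mulVecLin ≤ LinearMap.range σ.mulVecLin

/-- Quantum relative entropy `D(ρ‖σ) = Tr ρ (log ρ - log σ)` when
`supp ρ ⊆ supp σ`, and `+∞` otherwise. -/
def relEnt {n : Type*} [Fintype n] [DecidableEq n] (ρ σ : Matrix n n ℂ) : EReal :=
  if SuppLE ρ σ then (((ρ * (matLog ρ - matLog σ)).trace.re : ℝ) : EReal) else ⊤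

/-- The extension `Φ ⊗ id` of a map on matrices, acting on bipartite matrices. -/
def extendId {a b k : ℕ} (Φ : Matrix (Fin a) (Fin a) ℂ →ₗ[ℂ] Matrix (Fin b) (Fin b) ℂ)
    (M : Matrix (Fin a × Fin k) (Fin a × Fin k) ℂ) :
    Matrix (Fin b × Fin k) (Fin b × Fin k) ℂ :=
  Matrix.of fun p q => Φ (Matrix.of fun r s => M (r, p.2) (s, q.2)) p.1 q.1

/-- Complete positivity of a map on matrices. -/
def IsCompletelyPositive {a b : ℕ}
    (Φ : Matrix (Fin a) (Fin a) ℂ →ₗ[ℂ] Matrix (Fin b) (Fin b) ℂ) : Prop :=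
  ∀ k : ℕ, ∀ M : Matrix (Fin a × Fin k) (Fin a × Fin k) ℂ,
    M.PosSemidef → (extendId Φ M).PosSemidef

/-- A quantum channel: a completely positive trace-preserving linear map. -/
structure QChannel (a b : ℕ) where
  map : Matrix (Fin a) (Fin a) ℂ →ₗ[ℂ] Matrix (Fin b) (Fin b) ℂ
  cp : IsCompletelyPositive map
  tp : ∀ M, (map M).trace = M.trace

/-- The (unnormalized) maximally entangled projector `|φ⁺⟩⟨φ⁺|`, `|φ⁺⟩ = ∑ᵢ |ii⟩`. -/
def maxEnt (d : ℕ) : Matrix (Fin d × Fin d) (Fin d × Fin d) ℂ :=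
  Matrix.of fun p q => if p.1 = p.2 ∧ q.1 = q.2 then 1 else 0

/-- The Choi matrix `D_Φ = (Φ ⊗ id)(|φ⁺⟩⟨φ⁺|)`. -/
def choiOf {a b : ℕ} (Φ : Matrix (Fin a) (Fin a) ℂ →ₗ[ℂ] Matrix (Fin b) (Fin b) ℂ) :
    Matrix (Fin b × Fin a) (Fin b × Fin a) ℂ :=
  extendId Φ (maxEnt a)

/-- The Choi–Jamiołkowski state `J_Φ = D_Φ / d`. -/
def jamState {a b : ℕ} (Φ : Matrix (Fin a) (Fin a) ℂ →ₗ[ℂ] Matrix (Fin b) (Fin b) ℂ) :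
    Matrix (Fin b × Fin a) (Fin b × Fin a) ℂ :=
  ((a : ℂ))⁻¹ • choiOf Φ

/-- The map entropy `H^K(Φ) = H(J_Φ)`. -/
def mapEntropy {a b : ℕ} (Φ : Matrix (Fin a) (Fin a) ℂ →ₗ[ℂ] Matrix (Fin b) (Fin b) ℂ) : ℝ :=
  vonNeumann (jamState Φ)

/-- The completely depolarizing channel `R(ρ) = (Tr ρ) I / dim`. -/
def depolMap (a b : ℕ) : Matrix (Fin a) (Fin a) ℂ →ₗ[ℂ] Matrix (Fin b) (Fin b) ℂ where
  toFun M := M.trace • ((b : ℂ))⁻¹ • (1 : Matrix (Fin b) (Fin b) ℂ)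
  map_add' M N := by simp [Matrix.trace_add, add_smul]
  map_smul' c M := by simp [Matrix.trace_smul, smul_smul, mul_assoc]

/-- A pure state (rank-one projector onto a unit vector). -/
def IsPureState {n : Type*} [Fintype n] (ψ : Matrix n n ℂ) : Prop :=
  ∃ v : n → ℂ, (∑ i, Complex.normSq (v i)) = 1 ∧
    ψ = Matrix.of fun i j => v i * (starRingEnd ℂ) (v j)

/-- The channel relative entropy `D(Φ‖R)`: the supremum over bipartite pure
input states (on `X_A ⊗ X_R`, `X_R ≅ X_A`) of the relative entropy of the
output of the extended channel relative to the output of the extended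
completely depolarizing channel. -/
def relEntChannel {a b : ℕ} (Φ : QChannel a b) : EReal :=
  ⨆ ψ : {ψ : Matrix (Fin a × Fin a) (Fin a × Fin a) ℂ // IsPureState ψ},
    relEnt (extendId Φ.map ψ.1) (extendId (depolMap a b) ψ.1)

/-- The Gour–Wilde entropy of a quantum channel, `H(Φ) = log dim X_B - D(Φ‖R)`. -/
def gwEntropy {a b : ℕ} (Φ : QChannel a b) : EReal :=
  ((Real.log b : ℝ) : EReal) - relEntChannel Φ

/-- The vector `√p |00⟩ + √(1-p) |11⟩`. -/
def psiP (p : ℝ) : Fin 2 × Fin 2 → ℂ := fun x =>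
  if x.1 = 0 ∧ x.2 = 0 then ((Real.sqrt p : ℝ) : ℂ)
  else if x.1 = 1 ∧ x.2 = 1 then ((Real.sqrt (1 - p) : ℝ) : ℂ) else 0

/-- The two-qubit pure state `φ_P = |ψ_P⟩⟨ψ_P|` with `|ψ_P⟩ = √p|00⟩ + √(1-p)|11⟩`. -/
def phiP (p : ℝ) : Matrix (Fin 2 × Fin 2) (Fin 2 × Fin 2) ℂ :=
  Matrix.of fun x y => psiP p x * (starRingEnd ℂ) (psiP p y)

/-- `√P = diag(√p, √(1-p))`. -/
def sqrtP (p : ℝ) : Matrix (Fin 2) (Fin 2) ℂ :=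
  Matrix.diagonal ![((Real.sqrt p : ℝ) : ℂ), ((Real.sqrt (1 - p) : ℝ) : ℂ)]

/-- The Pauli matrix `σ_y = [[0, -i], [i, 0]]`. -/
def pauliY : Matrix (Fin 2) (Fin 2) ℂ := !![0, -Complex.I; Complex.I, 0]

/-- `√Q = diag(√(1-p), √p)`. -/
def sqrtQ (p : ℝ) : Matrix (Fin 2) (Fin 2) ℂ :=
  Matrix.diagonal ![((Real.sqrt (1 - p) : ℝ) : ℂ), ((Real.sqrt p : ℝ) : ℂ)]

lemma neg_kronecker_neg {R l m n p : Type*} [Mul R] [HasDistribNeg R]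
    (A : Matrix l m R) (B : Matrix n p R) : (-A) ⊗ₖ (-B) = A ⊗ₖ B := by
  ext
  simp

lemma map_kronecker {α β l m n p : Type*} [Semiring α] [Semiring β] (f : α →+* β)
    (A : Matrix l m α) (B : Matrix n p α) : (A ⊗ₖ B).map f = A.map f ⊗ₖ B.map f :=
  ext fun _ _ => map_mul f _ _

lemma adjugate_fin_two_eq_trace_smul_one_sub {R : Type*} [CommRing R]
    (A : Matrix (Fin 2) (Fin 2) R) : adjugate A = A.trace • 1 - A := by
  ext i j
  fin_cases i <;> fin_cases j <;> simp [adjugate_fin_two, trace_fin_two]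

lemma adjugate_map_eq_map_adjugate {R : Type*} [CommRing R]
    (Φ : Matrix (Fin 2) (Fin 2) R →ₗ[R] Matrix (Fin 2) (Fin 2) R)
    (htp : ∀ M, (Φ M).trace = M.trace) (hU : Φ 1 = 1) (A : Matrix (Fin 2) (Fin 2) R) :
    adjugate (Φ A) = Φ (adjugate A) := by
  rw [adjugate_fin_two_eq_trace_smul_one_sub, adjugate_fin_two_eq_trace_smul_one_sub, map_sub,
    map_smul, hU, htp]

lemma maxEnt_eq_vecMulVec (d : ℕ) :
    maxEnt d = vecMulVec (fun p : Fin d × Fin d => if p.1 = p.2 then (1 : ℂ) else 0)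
      (star fun p : Fin d × Fin d => if p.1 = p.2 then (1 : ℂ) else 0) := by
  ext p q
  by_cases hp : p.1 = p.2 <;> by_cases hq : q.1 = q.2 <;> simp [maxEnt, vecMulVec_apply, hp, hq]

lemma choiOf_isHermitian {a b : ℕ} (Φ : QChannel a b) : (choiOf Φ.map).IsHermitian := by
  refine (Φ.cp a (maxEnt a) ?_).isHermitian
  rw [maxEnt_eq_vecMulVec]
  exact posSemidef_vecMulVec_self_star _

lemma choiOf_apply {a b : ℕ} (Φ : Matrix (Fin a) (Fin a) ℂ →ₗ[ℂ] Matrix (Fin b) (Fin b) ℂ)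
    (i k : Fin b) (j l : Fin a) :
    choiOf Φ (i, j) (k, l) = Φ (single j l 1) i k := by
  have : (of fun r s => maxEnt a (r, j) (s, l)) = single j l 1 := by
    ext r s
    simp [maxEnt, single, eq_comm]
  exact congrArg (fun M => Φ M i k) this

lemma choiOf_eq_sum {a b : ℕ} (Φ : Matrix (Fin a) (Fin a) ℂ →ₗ[ℂ] Matrix (Fin b) (Fin b) ℂ) :
    choiOf Φ = ∑ j, ∑ l, Φ (single j l 1) ⊗ₖ single j l 1 := by
  ext ⟨i, j⟩ ⟨k, l⟩
  simp [choiOf_apply, Matrix.sum_apply, single_apply, ite_and]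

lemma pauliY_mul_transpose_mul_pauliY (A : Matrix (Fin 2) (Fin 2) ℂ) :
    pauliY * Aᵀ * pauliY = adjugate A := by
  ext i j
  fin_cases i <;> fin_cases j <;>
    simp [pauliY, adjugate_fin_two, mul_apply, Fin.sum_univ_two, vecMul, dotProduct] <;>
    ring_nf <;> simp

lemma pauliY_kron_mul_transpose_mul (A B : Matrix (Fin 2) (Fin 2) ℂ) :
    (pauliY ⊗ₖ pauliY) * (A ⊗ₖ B)ᵀ * (pauliY ⊗ₖ pauliY) = adjugate A ⊗ₖ adjugate B := by
  rw [← kroneckerMap_transpose, ← mul_kronecker_mul, ← mul_kronecker_mul,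
    pauliY_mul_transpose_mul_pauliY, pauliY_mul_transpose_mul_pauliY]

lemma pauliY_kron_mul_choiOf_transpose_mul
    (Φ : Matrix (Fin 2) (Fin 2) ℂ →ₗ[ℂ] Matrix (Fin 2) (Fin 2) ℂ)
    (htp : ∀ M, (Φ M).trace = M.trace) (hU : Φ 1 = 1) :
    (pauliY ⊗ₖ pauliY) * (choiOf Φ)ᵀ * (pauliY ⊗ₖ pauliY) = choiOf Φ := by
  have h00 : adjugate (single 0 0 1 : Matrix (Fin 2) (Fin 2) ℂ) = single 1 1 1 := by
    ext i k; fin_cases i <;> fin_cases k <;> simp [adjugate_fin_two]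
  have h01 : adjugate (single 0 1 1 : Matrix (Fin 2) (Fin 2) ℂ) = -single 0 1 1 := by
    ext i k; fin_cases i <;> fin_cases k <;> simp [adjugate_fin_two]
  have h10 : adjugate (single 1 0 1 : Matrix (Fin 2) (Fin 2) ℂ) = -single 1 0 1 := by
    ext i k; fin_cases i <;> fin_cases k <;> simp [adjugate_fin_two]
  have h11 : adjugate (single 1 1 1 : Matrix (Fin 2) (Fin 2) ℂ) = single 0 0 1 := by
    ext i k; fin_cases i <;> fin_cases k <;> simp [adjugate_fin_two]
  rw [choiOf_eq_sum]
  simp only [transpose_sum, Finset.mul_sum, Finset.sum_mul]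
  simp only [pauliY_kron_mul_transpose_mul, adjugate_map_eq_map_adjugate Φ htp hU,
    Fin.sum_univ_two, h00, h01, h10, h11, map_neg, neg_kronecker_neg]
  abel

lemma pauliY_mul_diagonal (a b : ℂ) :
    pauliY * diagonal ![a, b] = diagonal ![b, a] * pauliY := by
  ext i j
  fin_cases i <;> fin_cases j <;> simp [pauliY, mul_comm]

lemma pauliY_mul_sqrtP (p : ℝ) : pauliY * sqrtP p = sqrtQ p * pauliY :=
  pauliY_mul_diagonal _ _

lemma sqrtP_mul_pauliY (p : ℝ) : sqrtP p * pauliY = pauliY * sqrtQ p :=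
  (pauliY_mul_diagonal _ _).symm

lemma pauliY_map_conj : pauliY.map (starRingEnd ℂ) = -pauliY := by
  ext i j
  fin_cases i <;> fin_cases j <;> simp [pauliY]

lemma sqrtQ_map_conj (p : ℝ) : (sqrtQ p).map (starRingEnd ℂ) = sqrtQ p := by
  ext i j
  fin_cases i <;> fin_cases j <;> simp [sqrtQ]

theorem conj_pauliY_sqrtP_choi_general (Φ : QChannel 2 2) (hU : Φ.map 1 = 1) (p : ℝ) :
    ((pauliY ⊗ₖ pauliY) *
        (((1 : Matrix (Fin 2) (Fin 2) ℂ) ⊗ₖ sqrtP p) * choiOf Φ.map *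
          ((1 : Matrix (Fin 2) (Fin 2) ℂ) ⊗ₖ sqrtP p)) *
        (pauliY ⊗ₖ pauliY)).map (starRingEnd ℂ) =
      ((1 : Matrix (Fin 2) (Fin 2) ℂ) ⊗ₖ sqrtQ p) * choiOf Φ.map *
        ((1 : Matrix (Fin 2) (Fin 2) ℂ) ⊗ₖ sqrtQ p) := by
  set D := choiOf Φ.map
  set F := pauliY ⊗ₖ pauliY
  set P := (1 : Matrix (Fin 2) (Fin 2) ℂ) ⊗ₖ sqrtP p
  set Q := (1 : Matrix (Fin 2) (Fin 2) ℂ) ⊗ₖ sqrtQ p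
  have hFP : F * P = Q * F := by
    rw [← mul_kronecker_mul, ← mul_kronecker_mul, Matrix.mul_one, Matrix.one_mul,
      pauliY_mul_sqrtP]
  have hPF : P * F = F * Q := by
    rw [← mul_kronecker_mul, ← mul_kronecker_mul, Matrix.mul_one, Matrix.one_mul,
      sqrtP_mul_pauliY]
  have hF : F.map (starRingEnd ℂ) = F := by
    rw [map_kronecker, pauliY_map_conj, neg_kronecker_neg]
  have hQ : Q.map (starRingEnd ℂ) = Q := by
    rw [map_kronecker, Matrix.map_one _ (map_zero _) (map_one _), sqrtQ_map_conj]
  have hD : D.map (starRingEnd ℂ) = Dᵀ := congrArg transpose (choiOf_isHermitian Φ)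
  calc (F * (P * D * P) * F).map (starRingEnd ℂ)
      = (Q * (F * D * F) * Q).map (starRingEnd ℂ) := by
        simp only [← Matrix.mul_assoc, hFP]
        simp only [Matrix.mul_assoc, hPF]
    _ = Q * (F * Dᵀ * F) * Q := by simp only [Matrix.map_mul, hF, hQ, hD]
    _ = Q * D * Q := by rw [pauliY_kron_mul_choiOf_transpose_mul Φ.map Φ.tp hU]

/-- For any unital qubit channel `Φ ∈ C(ℂ²)`, with `√P = diag(√p, √(1-p))`
and `√Q = diag(√(1-p), √p)`,
`((σ_y⊗σ_y)(I⊗√P) D_Φ (I⊗√P)(σ_y⊗σ_y))* = (I⊗√Q) D_Φ (I⊗√Q)`,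
where `*` is entrywise complex conjugation. -/
theorem conj_pauliY_sqrtP_choi (Φ : QChannel 2 2) (hU : Φ.map 1 = 1) (p : ℝ)
    (hp : p ∈ Set.Icc (0 : ℝ) 1) :
    ((pauliY ⊗ₖ pauliY) *
        (((1 : Matrix (Fin 2) (Fin 2) ℂ) ⊗ₖ sqrtP p) * choiOf Φ.map *
          ((1 : Matrix (Fin 2) (Fin 2) ℂ) ⊗ₖ sqrtP p)) *
        (pauliY ⊗ₖ pauliY)).map (starRingEnd ℂ) =
      ((1 : Matrix (Fin 2) (Fin 2) ℂ) ⊗ₖ sqrtQ p) * choiOf Φ.map *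
        ((1 : Matrix (Fin 2) (Fin 2) ℂ) ⊗ₖ sqrtQ p) :=
  conj_pauliY_sqrtP_choi_general Φ hU p
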